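/- Let H, W be Hilbert spaces, ω > 0, A, A_h : H → W bounded linear with ‖A - A_h‖ ≤ δ, b ∈ W, K nonempty closed convex and bounded with ‖v‖ ≤ M for all v ∈ K. If u minimizes J(v) = (1/2)‖Av - b‖² + (ω/2)‖v‖² over K and u_h minimizes J_h(v) = (1/2)‖A_h v - b‖² + (ω/2)‖v‖² over K, then ω‖u - u_h‖² ≤ δ·(‖A‖·M + ‖A_h‖·M + 2‖b‖)·‖u - u_h‖, hence ‖u - u_h‖ ≤ (δ/ω)(M(‖A‖ + ‖A_h‖) + 2‖b‖). -/

import Mathlib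

/-!
Both minimizers satisfy the first-order optimality condition (a variational inequality) of
their functional on the convex set `K`. Testing the condition for `u` with `uh` and the one
for `uh` with `u` and adding them, the strong convexity term produces `ω ‖u - uh‖²`, while
what remains only involves `A - Ah` applied to vectors of norm at most `M` or to `u - uh`.
-/

open scoped RealInnerProductSpace

section Tikhonov

variable {H W : Type*} [NormedAddCommGroup H] [InnerProductSpace ℝ H]
  [NormedAddCommGroup W] [InnerProductSpace ℝ W]

theorem IsMinOn.hasFDerivAt_sub_nonneg_of_convex {f : H → ℝ} {f' : H →L[ℝ] ℝ} {s : Set H}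
    {a y : H} (h : IsMinOn f s a) (hf : HasFDerivAt f f' a) (hs : Convex ℝ s) (ha : a ∈ s)
    (hy : y ∈ s) : 0 ≤ f' (y - a) :=
  h.localize.hasFDerivWithinAt_nonneg hf.hasFDerivWithinAt
    (sub_mem_posTangentConeAt_of_segment_subset (hs.segment_subset ha hy))

noncomputable def tikhonovFunctional (B : H →L[ℝ] W) (b : W) (ω : ℝ) (v : H) : ℝ :=
  (1/2) * ‖B v - b‖^2 + (ω/2) * ‖v‖^2

theorem hasFDerivAt_tikhonovFunctional (B : H →L[ℝ] W) (b : W) (ω : ℝ) (u : H) :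
    HasFDerivAt (tikhonovFunctional B b ω) ((innerSL ℝ (B u - b)).comp B + ω • innerSL ℝ u) u := by
  have hfit := (((B.hasFDerivAt (x := u)).sub_const b).norm_sq).const_mul (1/2 : ℝ)
  have hreg := ((hasFDerivAt_id u).norm_sq).const_mul (ω/2)
  refine (hfit.add hreg).congr_fderiv ?_
  ext v
  simp only [add_apply, smul_apply, ContinuousLinearMap.comp_apply, innerSL_apply_apply,
    ContinuousLinearMap.coe_id', id, smul_eq_mul, nsmul_eq_mul]
  ring

theorem tikhonovFunctional_variational_inequality {K : Set H} (hK : Convex ℝ K)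
    {B : H →L[ℝ] W} {b : W} {ω : ℝ} {u v : H} (hu : u ∈ K)
    (hmin : IsMinOn (tikhonovFunctional B b ω) K u) (hv : v ∈ K) :
    0 ≤ ⟪B u - b, B (v - u)⟫ + ω * ⟪u, v - u⟫ := by
  simpa only [add_apply, smul_apply,
    ContinuousLinearMap.comp_apply, innerSL_apply_apply, smul_eq_mul]
    using hmin.hasFDerivAt_sub_nonneg_of_convex (hasFDerivAt_tikhonovFunctional B b ω u) hK hu hv

theorem mul_norm_sub_sq_le_of_isMinOn_tikhonovFunctional {K : Set H} (hK : Convex ℝ K)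
    {M : ℝ} (hM : ∀ v ∈ K, ‖v‖ ≤ M) {ω δ : ℝ} {A Ah : H →L[ℝ] W} (hδ : ‖A - Ah‖ ≤ δ) {b : W}
    {u uh : H} (hu : u ∈ K) (huh : uh ∈ K)
    (hmin : IsMinOn (tikhonovFunctional A b ω) K u)
    (hminh : IsMinOn (tikhonovFunctional Ah b ω) K uh) :
    ω * ‖u - uh‖^2 ≤ δ * (‖A‖ * M + ‖Ah‖ * M + ‖b‖) * ‖u - uh‖ := by
  have hvi := tikhonovFunctional_variational_inequality hK hu hmin huh
  have hvih := tikhonovFunctional_variational_inequality hK huh hminh hu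
  set w := u - uh
  set E := A - Ah
  have hM0 : 0 ≤ M := (norm_nonneg u).trans (hM u hu)
  have hδ0 : 0 ≤ δ := (norm_nonneg E).trans hδ
  have hsum : ω * ‖w‖^2 ≤ ⟪Ah uh - b, Ah w⟫ - ⟪A u - b, A w⟫ := by
    have hw : uh - u = -w := (neg_sub u uh).symm
    rw [hw, map_neg, inner_neg_right, inner_neg_right] at hvi
    have hnorm : ‖w‖^2 = ⟪u, w⟫ - ⟪uh, w⟫ := by
      rw [← real_inner_self_eq_norm_sq, inner_sub_left]
    rw [hnorm]
    linarith
  -- `Ah uh - A u = -(E uh) - A w` moves every occurrence of `Ah` next to an `E`.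
  have hsplit : ⟪Ah uh - b, Ah w⟫ - ⟪A u - b, A w⟫
      = -⟪Ah uh - b, E w⟫ - ⟪E uh, A w⟫ - ‖A w‖^2 := by
    simp only [E, w, sub_apply, map_sub, inner_sub_left, inner_sub_right,
      ← real_inner_self_eq_norm_sq]
    ring
  calc ω * ‖w‖^2
      ≤ -⟪Ah uh - b, E w⟫ - ⟪E uh, A w⟫ - ‖A w‖^2 := hsum.trans_eq hsplit
    _ ≤ ‖Ah uh - b‖ * ‖E w‖ + ‖E uh‖ * ‖A w‖ := by
        linarith [neg_le_of_abs_le (abs_real_inner_le_norm (Ah uh - b) (E w)),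
          neg_le_of_abs_le (abs_real_inner_le_norm (E uh) (A w)), sq_nonneg ‖A w‖]
    _ ≤ (‖Ah‖ * M + ‖b‖) * (δ * ‖w‖) + (δ * M) * (‖A‖ * ‖w‖) := by
        have hAhuh : ‖Ah uh - b‖ ≤ ‖Ah‖ * M + ‖b‖ :=
          (norm_sub_le _ _).trans (by gcongr; exact Ah.le_opNorm_of_le (hM uh huh))
        gcongr
        · exact E.le_of_opNorm_le hδ w
        · exact E.le_of_opNorm_le_of_le hδ (hM uh huh)
        · exact A.le_opNorm w
    _ = δ * (‖A‖ * M + ‖Ah‖ * M + ‖b‖) * ‖w‖ := by ring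

end Tikhonov

theorem le_div_of_mul_sq_le_mul {a c x : ℝ} (ha : 0 < a) (hc : 0 ≤ c) (hx : 0 ≤ x)
    (h : a * x^2 ≤ c * x) : x ≤ c / a := by
  rw [le_div_iff₀ ha]
  rcases hx.eq_or_lt with rfl | hx
  · simpa using hc
  · exact le_of_mul_le_mul_right (by nlinarith) hx

theorem stmt_14_general {H W : Type*} [NormedAddCommGroup H] [InnerProductSpace ℝ H]
    [NormedAddCommGroup W] [InnerProductSpace ℝ W]
    (K : Set H) (hKcv : Convex ℝ K)
    (M : ℝ) (hKbd : ∀ v ∈ K, ‖v‖ ≤ M)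
    (ω : ℝ) (hω : 0 < ω) (A Ah : H →L[ℝ] W) (δ : ℝ) (hδ : ‖A - Ah‖ ≤ δ) (b : W)
    (u uh : H) (hu : u ∈ K) (huh : uh ∈ K)
    (hmin : ∀ v ∈ K, (1/2) * ‖A u - b‖^2 + (ω/2) * ‖u‖^2 ≤ (1/2) * ‖A v - b‖^2 + (ω/2) * ‖v‖^2)
    (hminh : ∀ v ∈ K, (1/2) * ‖Ah uh - b‖^2 + (ω/2) * ‖uh‖^2 ≤ (1/2) * ‖Ah v - b‖^2 + (ω/2) * ‖v‖^2) :
    ω * ‖u - uh‖^2 ≤ δ * (‖A‖ * M + ‖Ah‖ * M + 2 * ‖b‖) * ‖u - uh‖ ∧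
    ‖u - uh‖ ≤ (δ/ω) * (M * (‖A‖ + ‖Ah‖) + 2 * ‖b‖) := by
  have hδ0 : 0 ≤ δ := (norm_nonneg _).trans hδ
  have hM0 : 0 ≤ M := (norm_nonneg u).trans (hKbd u hu)
  have hestimate := mul_norm_sub_sq_le_of_isMinOn_tikhonovFunctional hKcv hKbd hδ hu huh
    (isMinOn_iff.mpr hmin) (isMinOn_iff.mpr hminh)
  have hbound : ω * ‖u - uh‖^2 ≤ δ * (‖A‖ * M + ‖Ah‖ * M + 2 * ‖b‖) * ‖u - uh‖ :=
    hestimate.trans (by gcongr; linarith [norm_nonneg b])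
  refine ⟨hbound, ?_⟩
  calc ‖u - uh‖ ≤ δ * (‖A‖ * M + ‖Ah‖ * M + 2 * ‖b‖) / ω :=
        le_div_of_mul_sq_le_mul hω (by positivity) (norm_nonneg _) hbound
    _ = (δ/ω) * (M * (‖A‖ + ‖Ah‖) + 2 * ‖b‖) := by ring

theorem stmt_14 {H W : Type*} [NormedAddCommGroup H] [InnerProductSpace ℝ H] [CompleteSpace H]
    [NormedAddCommGroup W] [InnerProductSpace ℝ W] [CompleteSpace W]
    (K : Set H) (hKne : K.Nonempty) (hKcl : IsClosed K) (hKcv : Convex ℝ K)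
    (M : ℝ) (hKbd : ∀ v ∈ K, ‖v‖ ≤ M)
    (ω : ℝ) (hω : 0 < ω) (A Ah : H →L[ℝ] W) (δ : ℝ) (hδ : ‖A - Ah‖ ≤ δ) (b : W)
    (u uh : H) (hu : u ∈ K) (huh : uh ∈ K)
    (hmin : ∀ v ∈ K, (1/2) * ‖A u - b‖^2 + (ω/2) * ‖u‖^2 ≤ (1/2) * ‖A v - b‖^2 + (ω/2) * ‖v‖^2)
    (hminh : ∀ v ∈ K, (1/2) * ‖Ah uh - b‖^2 + (ω/2) * ‖uh‖^2 ≤ (1/2) * ‖Ah v - b‖^2 + (ω/2) * ‖v‖^2) :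
    ω * ‖u - uh‖^2 ≤ δ * (‖A‖ * M + ‖Ah‖ * M + 2 * ‖b‖) * ‖u - uh‖ ∧
    ‖u - uh‖ ≤ (δ/ω) * (M * (‖A‖ + ‖Ah‖) + 2 * ‖b‖) :=
  stmt_14_general K hKcv M hKbd ω hω A Ah δ hδ b u uh hu huh hmin hminh
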